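/- If a₁, a₂, a₃ ∈ ℝ³ are collinear, then the stacked matrix 𝔾 = [G(a₁); G(a₂); G(a₃)] with G(a) = [a^× −I] has rank at most 5; hence the rigid body velocity ξ ∈ ℝ⁶ is not uniquely determined by the equations G(aⱼ)ξ = vⱼ, j = 1,2,3. -/

import Mathlib

open Matrix

noncomputable def hat (v : Fin 3 → ℝ) : Matrix (Fin 3) (Fin 3) ℝ :=
  !![0, -v 2, v 1; v 2, 0, -v 0; -v 1, v 0, 0]

noncomputable def Gmat (a : Fin 3 → ℝ) : Matrix (Fin 3) (Fin 3 ⊕ Fin 3) ℝ :=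
  Matrix.of fun i => Sum.elim (fun j => hat a i j) (fun j => -(1 : Matrix (Fin 3) (Fin 3) ℝ) i j)

noncomputable def Gstack (a₁ a₂ a₃ : Fin 3 → ℝ) :
    Matrix (Fin 3 ⊕ (Fin 3 ⊕ Fin 3)) (Fin 3 ⊕ Fin 3) ℝ :=
  Matrix.of (Sum.elim (Gmat a₁) (Sum.elim (Gmat a₂) (Gmat a₃)))

/-!
A collinear triple lies on a line `p + ℝ u` with `u ≠ 0`. Since `G(a) (ω, v) = a × ω - v`, the
twist `ξ = (u, p × u)` of a rotation about that line satisfies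
`G(p + r u) ξ = (p + r u) × u - p × u = r (u × u) = 0`, so `ξ` is a nonzero vector in the
kernel of every `G(aⱼ)`, and rank–nullity bounds the rank of `𝔾` by `6 - 1`.
-/

theorem Matrix.rank_lt_card_width_of_mulVec_eq_zero {m n K : Type*} [Fintype n] [Field K]
    (A : Matrix m n K) {v : n → K} (hv : v ≠ 0) (hAv : A *ᵥ v = 0) :
    A.rank < Fintype.card n := by
  have hker : 0 < Module.finrank K (LinearMap.ker A.mulVecLin) :=
    Module.finrank_pos_iff_exists_ne_zero.mpr ⟨⟨v, hAv⟩, fun h0 => hv (congrArg Subtype.val h0)⟩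
  have hsum := LinearMap.finrank_range_add_finrank_ker A.mulVecLin
  rw [Module.finrank_fintype_fun_eq_card] at hsum
  rw [Matrix.rank]
  omega

theorem Collinear.exists_ne_zero_forall_eq_smul_add {k V : Type*} [Field k] [AddCommGroup V]
    [Module k V] [Nontrivial V] {s : Set V} (h : Collinear k s) :
    ∃ p u : V, u ≠ 0 ∧ ∀ x ∈ s, ∃ r : k, x = r • u + p := by
  obtain ⟨p, v, hv⟩ := (collinear_iff_exists_forall_eq_smul_vadd s).mp h
  by_cases hv0 : v = 0
  · obtain ⟨u, hu⟩ := exists_ne (0 : V)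
    refine ⟨p, u, hu, fun x hx => ⟨0, ?_⟩⟩
    obtain ⟨r, rfl⟩ := hv x hx
    simp [hv0]
  · exact ⟨p, v, hv0, hv⟩

theorem hat_mulVec (a b : Fin 3 → ℝ) : hat a *ᵥ b = a ⨯₃ b := by
  ext i
  fin_cases i <;> simp [hat, cross_apply, mulVec, dotProduct, Fin.sum_univ_three] <;> ring

theorem Gmat_mulVec_sumElim (a ω v : Fin 3 → ℝ) : Gmat a *ᵥ Sum.elim ω v = a ⨯₃ ω - v := by
  change fromCols (hat a) (-1) *ᵥ Sum.elim ω v = _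
  rw [fromCols_mulVec_sumElim, hat_mulVec, neg_mulVec, one_mulVec, sub_eq_add_neg]

theorem Gmat_mulVec_rotation_twist (p u : Fin 3 → ℝ) (r : ℝ) :
    Gmat (r • u + p) *ᵥ Sum.elim u (p ⨯₃ u) = 0 := by
  rw [Gmat_mulVec_sumElim, map_add, map_smul, LinearMap.add_apply, LinearMap.smul_apply,
    cross_self, smul_zero, zero_add, sub_self]

/-- If the three points are collinear then 𝔾 has rank at most 5, and the rigid body
velocity ξ is not uniquely determined by G(aⱼ)ξ = vⱼ, j = 1,2,3. -/
theorem Gstack_collinear_rank_le_five (a₁ a₂ a₃ : Fin 3 → ℝ)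
    (h : Collinear ℝ ({a₁, a₂, a₃} : Set (Fin 3 → ℝ))) :
    (Gstack a₁ a₂ a₃).rank ≤ 5 ∧
    ∃ ξ ξ' : Fin 3 ⊕ Fin 3 → ℝ, ξ ≠ ξ' ∧
      (Gmat a₁).mulVec ξ = (Gmat a₁).mulVec ξ' ∧
      (Gmat a₂).mulVec ξ = (Gmat a₂).mulVec ξ' ∧
      (Gmat a₃).mulVec ξ = (Gmat a₃).mulVec ξ' := by
  obtain ⟨p, u, hu, hline⟩ := h.exists_ne_zero_forall_eq_smul_add
  set ξ : Fin 3 ⊕ Fin 3 → ℝ := Sum.elim u (p ⨯₃ u)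
  have hξ : ξ ≠ 0 := fun h0 => hu (by simpa [ξ] using congrArg (· ∘ Sum.inl) h0)
  have hG : ∀ a ∈ ({a₁, a₂, a₃} : Set (Fin 3 → ℝ)), Gmat a *ᵥ ξ = 0 := by
    intro a ha
    obtain ⟨r, rfl⟩ := hline a ha
    exact Gmat_mulVec_rotation_twist p u r
  have h₁ := hG a₁ (by simp)
  have h₂ := hG a₂ (by simp)
  have h₃ := hG a₃ (by simp)
  refine ⟨?_, ξ, 0, hξ, by simp [h₁], by simp [h₂], by simp [h₃]⟩
  have hstack : Gstack a₁ a₂ a₃ *ᵥ ξ = 0 := by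
    change fromRows (Gmat a₁) (fromRows (Gmat a₂) (Gmat a₃)) *ᵥ ξ = 0
    simp [h₁, h₂, h₃]
  have hlt := Matrix.rank_lt_card_width_of_mulVec_eq_zero _ hξ hstack
  simp only [Fintype.card_sum, Fintype.card_fin] at hlt
  omega
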